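/- Let (G,ψ) be a Γ-gain graph and let H₁, H₂ be subgraphs of G with V₀(H₁) = V₀(H₂) = ∅. Suppose H₁ is proper near-balanced, |E(H₁)| = 2|V(H₁)|, and there is an edge f₁ ∈ E(H₁) such that H₁ − f₁ is (2,1)-tight. If H₂ is connected and balanced, and H₁ ∩ H₂ is connected, balanced and (2,3)-tight, then H₁ ∪ H₂ is proper near-balanced. -/

import Mathlib

open scoped Classical

namespace GR

/-- A finite directed multigraph with edge labels ("gains") in a group `Γ` and a
designated finite set of fixed vertices. -/
structure GainedGraph (V E Γ : Type) where
  tail : E → V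
  head : E → V
  gain : E → Γ
  fixed : Finset V

variable {V E Γ : Type} [DecidableEq V] [DecidableEq E] [Fintype V] [Fintype E] [Group Γ]

/-- A subgraph: a set of vertices and a set of edges whose endpoints lie in the vertex set. -/
structure Subgraph (G : GainedGraph V E Γ) where
  verts : Finset V
  edges : Finset E
  tail_mem : ∀ e ∈ edges, G.tail e ∈ verts
  head_mem : ∀ e ∈ edges, G.head e ∈ verts

namespace Subgraph

variable {G : GainedGraph V E Γ}

instance : Top (Subgraph G) :=
  ⟨⟨Finset.univ, Finset.univ, fun _ _ => Finset.mem_univ _, fun _ _ => Finset.mem_univ _⟩⟩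

instance : LE (Subgraph G) :=
  ⟨fun H K => H.verts ⊆ K.verts ∧ H.edges ⊆ K.edges⟩

def union (H K : Subgraph G) : Subgraph G where
  verts := H.verts ∪ K.verts
  edges := H.edges ∪ K.edges
  tail_mem e he := by
    rcases Finset.mem_union.1 he with h | h
    · exact Finset.mem_union_left _ (H.tail_mem e h)
    · exact Finset.mem_union_right _ (K.tail_mem e h)
  head_mem e he := by
    rcases Finset.mem_union.1 he with h | h
    · exact Finset.mem_union_left _ (H.head_mem e h)
    · exact Finset.mem_union_right _ (K.head_mem e h)

def inter (H K : Subgraph G) : Subgraph G where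
  verts := H.verts ∩ K.verts
  edges := H.edges ∩ K.edges
  tail_mem e he := by
    rcases Finset.mem_inter.1 he with ⟨h1, h2⟩
    exact Finset.mem_inter.2 ⟨H.tail_mem e h1, K.tail_mem e h2⟩
  head_mem e he := by
    rcases Finset.mem_inter.1 he with ⟨h1, h2⟩
    exact Finset.mem_inter.2 ⟨H.head_mem e h1, K.head_mem e h2⟩

/-- Delete a vertex together with all edges incident to it. -/
def deleteVertex (H : Subgraph G) (v : V) : Subgraph G where
  verts := H.verts.erase v
  edges := H.edges.filter fun e => G.tail e ≠ v ∧ G.head e ≠ v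
  tail_mem e he := by
    rcases Finset.mem_filter.1 he with ⟨h1, h2, h3⟩
    exact Finset.mem_erase.2 ⟨h2, H.tail_mem e h1⟩
  head_mem e he := by
    rcases Finset.mem_filter.1 he with ⟨h1, h2, h3⟩
    exact Finset.mem_erase.2 ⟨h3, H.head_mem e h1⟩

/-- Delete an edge. -/
def deleteEdge (H : Subgraph G) (f : E) : Subgraph G where
  verts := H.verts
  edges := H.edges.erase f
  tail_mem e he := H.tail_mem e (Finset.mem_of_mem_erase he)
  head_mem e he := H.head_mem e (Finset.mem_of_mem_erase he)

/-- Add an edge (together with its endpoints). -/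
def addEdge (H : Subgraph G) (f : E) : Subgraph G where
  verts := insert (G.tail f) (insert (G.head f) H.verts)
  edges := insert f H.edges
  tail_mem e he := by
    rcases Finset.mem_insert.1 he with rfl | h
    · exact Finset.mem_insert_self _ _
    · exact Finset.mem_insert_of_mem (Finset.mem_insert_of_mem (H.tail_mem e h))
  head_mem e he := by
    rcases Finset.mem_insert.1 he with rfl | h
    · exact Finset.mem_insert_of_mem (Finset.mem_insert_self _ _)
    · exact Finset.mem_insert_of_mem (Finset.mem_insert_of_mem (H.head_mem e h))

/-- The free vertices of a subgraph. -/
def freeVerts (H : Subgraph G) : Finset V := H.verts \ G.fixed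

/-- The fixed vertices of a subgraph. -/
def fixedVerts (H : Subgraph G) : Finset V := H.verts ∩ G.fixed

end Subgraph

/-- The starting vertex of an oriented traversal of an edge. -/
def stepStart (G : GainedGraph V E Γ) (s : E × Bool) : V :=
  if s.2 then G.tail s.1 else G.head s.1

/-- The ending vertex of an oriented traversal of an edge. -/
def stepEnd (G : GainedGraph V E Γ) (s : E × Bool) : V :=
  if s.2 then G.head s.1 else G.tail s.1

/-- The gain contributed by an oriented traversal of an edge. -/
def stepGain (G : GainedGraph V E Γ) (s : E × Bool) : Γ :=
  if s.2 then G.gain s.1 else (G.gain s.1)⁻¹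

/-- `IsWalk G H L u w` : `L` is a walk in the subgraph `H` from `u` to `w`. -/
def IsWalk (G : GainedGraph V E Γ) (H : Subgraph G) : List (E × Bool) → V → V → Prop
  | [], u, w => u = w ∧ u ∈ H.verts
  | s :: L, u, w => s.1 ∈ H.edges ∧ stepStart G s = u ∧ IsWalk G H L (stepEnd G s) w

/-- The gain of a walk. -/
def walkGain (G : GainedGraph V E Γ) (L : List (E × Bool)) : Γ :=
  (L.map (stepGain G)).prod

/-- The vertices visited by a walk starting at `u`. -/
def walkVerts (G : GainedGraph V E Γ) (u : V) (L : List (E × Bool)) : List V :=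
  u :: L.map (stepEnd G)

/-- `⟨H⟩` : the subgroup of `Γ` generated by the gains of all closed walks in `H`
containing no fixed vertex. -/
def gainGroup (G : GainedGraph V E Γ) (H : Subgraph G) : Subgroup Γ :=
  Subgroup.closure
    {g | ∃ u L, IsWalk G H L u u ∧ (∀ x ∈ walkVerts G u L, x ∉ G.fixed) ∧ walkGain G L = g}

/-- A subgraph is balanced if its gain group is trivial. -/
def Balanced (G : GainedGraph V E Γ) (H : Subgraph G) : Prop := gainGroup G H = ⊥

def Reachable (G : GainedGraph V E Γ) (H : Subgraph G) (u w : V) : Prop :=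
  ∃ L, IsWalk G H L u w

def Connected (G : GainedGraph V E Γ) (H : Subgraph G) : Prop :=
  H.verts.Nonempty ∧ ∀ u ∈ H.verts, ∀ w ∈ H.verts, Reachable G H u w

/-- `v` is a cut-vertex of the subgraph `H`. -/
def IsCutVertex (G : GainedGraph V E Γ) (H : Subgraph G) (v : V) : Prop :=
  v ∈ H.verts ∧ ∃ u ∈ H.verts, ∃ w ∈ H.verts, u ≠ v ∧ w ≠ v ∧
    Reachable G H u w ∧ ¬ Reachable G (H.deleteVertex v) u w

/-- `(2,m,l)`-sparsity of the subgraph `K`. -/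
def Sparse (G : GainedGraph V E Γ) (m l : ℤ) (K : Subgraph G) : Prop :=
  ∀ H : Subgraph G, H ≤ K → H.edges.Nonempty →
    (H.edges.card : ℤ) ≤ 2 * (H.freeVerts.card : ℤ) + m * (H.fixedVerts.card : ℤ) - l

/-- `(2,m,l)`-tightness of the subgraph `K`. -/
def Tight (G : GainedGraph V E Γ) (m l : ℤ) (K : Subgraph G) : Prop :=
  Sparse G m l K ∧
    (K.edges.card : ℤ) = 2 * (K.freeVerts.card : ℤ) + m * (K.fixedVerts.card : ℤ) - l

/-- `(2,m,3,l)`-gain-tightness: `(2,m,l)`-tight and every balanced subgraph with a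
nonempty edge set is `(2,3)`-sparse. -/
def GainTight23 (G : GainedGraph V E Γ) (m l : ℤ) (K : Subgraph G) : Prop :=
  Tight G m l K ∧ ∀ H : Subgraph G, H ≤ K → H.edges.Nonempty → Balanced G H →
    (H.edges.card : ℤ) ≤ 2 * (H.verts.card : ℤ) - 3

/-- The subgraph has no fixed vertex. -/
def NoFixed (G : GainedGraph V E Γ) (H : Subgraph G) : Prop :=
  ∀ x ∈ H.verts, x ∉ G.fixed

/-- Near-balanced with base vertex `v` and gain `δ`: unbalanced, and every closed
walk starting at `v` not containing `v` as an internal vertex has gain `1`, `δ` or `δ⁻¹`. -/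
def NearBalancedAt (G : GainedGraph V E Γ) (H : Subgraph G) (v : V) (δ : Γ) : Prop :=
  ¬ Balanced G H ∧ ∀ L, IsWalk G H L v v →
    (∀ x ∈ (L.map (stepEnd G)).dropLast, x ≠ v) → walkGain G L ∈ ({1, δ, δ⁻¹} : Set Γ)

def NearBalanced (G : GainedGraph V E Γ) (H : Subgraph G) : Prop :=
  NoFixed G H ∧ ∃ v ∈ H.verts, ∃ δ : Γ, NearBalancedAt G H v δ

/-- The gain group of `H` is isomorphic to `ℤ_n`. -/
def IsZIso (G : GainedGraph V E Γ) (H : Subgraph G) (n : ℕ) : Prop :=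
  Nonempty (gainGroup G H ≃* Multiplicative (ZMod n))

def ProperNearBalanced (G : GainedGraph V E Γ) (H : Subgraph G) : Prop :=
  NearBalanced G H ∧ ¬ IsZIso G H 2 ∧ ¬ IsZIso G H 3

/-- The set `S_i(k,j)`. -/
def SSet (k j : ℕ) (i : ℤ) : Set ℕ :=
  {n | 2 ≤ n ∧ n ∣ k ∧ (Odd j → n ≠ 2) ∧ ((j : ZMod n) = (i : ZMod n))}

/-- `H` is `S_i(k,j)`. -/
def IsS (G : GainedGraph V E Γ) (k j : ℕ) (i : ℤ) (H : Subgraph G) : Prop :=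
  ∃ n ∈ SSet k j i, IsZIso G H n

/-- `H` is `S_{±1}(k,j)`. -/
def IsSpm (G : GainedGraph V E Γ) (k j : ℕ) (H : Subgraph G) : Prop :=
  IsS G k j (-1) H ∨ IsS G k j 1 H

/-- The function `α_k^j` on (connected) subgraphs. -/
noncomputable def alpha (G : GainedGraph V E Γ) (k j : ℕ) (X : Subgraph G) : ℤ :=
  if Balanced G X then 0
  else if Odd j ∧ IsZIso G X 2 then 1
  else if IsSpm G k j X then 2 - (X.fixedVerts.card : ℤ)
  else if IsS G k j 0 X ∨ (X.fixedVerts.card = 0 ∧ ProperNearBalanced G X) then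
    2 - 2 * (X.fixedVerts.card : ℤ)
  else 3 - 2 * (X.fixedVerts.card : ℤ)

/-- The subgraph spanned by a set of edges. -/
def edgeSpan (G : GainedGraph V E Γ) (F : Finset E) : Subgraph G where
  verts := F.image G.tail ∪ F.image G.head
  edges := F
  tail_mem e he := Finset.mem_union_left _ (Finset.mem_image_of_mem _ he)
  head_mem e he := Finset.mem_union_right _ (Finset.mem_image_of_mem _ he)

/-- The connected component of the edge `e` in the subgraph spanned by `F`. -/
noncomputable def componentOf (G : GainedGraph V E Γ) (F : Finset E) (e : E) : Subgraph G :=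
  edgeSpan G (F.filter fun f => Reachable G (edgeSpan G F) (G.tail e) (G.tail f))

/-- The connected components of the edge set `F`. -/
noncomputable def components (G : GainedGraph V E Γ) (F : Finset E) : Finset (Subgraph G) :=
  F.image (componentOf G F)

/-- The count `f_k^j(F) = Σ_{X ∈ C(F)} (2|V(X)| − 3 + α_k^j(X))`. -/
noncomputable def fCount (G : GainedGraph V E Γ) (k j : ℕ) (F : Finset E) : ℤ :=
  ∑ X ∈ components G F, (2 * (X.verts.card : ℤ) - 3 + alpha G k j X)

/-- `ℤ_k^j`-gain sparsity. -/
def GainSparseKJ (G : GainedGraph V E Γ) (k j : ℕ) (K : Subgraph G) : Prop :=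
  ∀ H : Subgraph G, H ≤ K → H.edges.Nonempty → (H.edges.card : ℤ) ≤ fCount G k j H.edges

/-- `ℤ_k^j`-gain tightness. -/
def GainTightKJ (G : GainedGraph V E Γ) (k j : ℕ) (K : Subgraph G) : Prop :=
  GainSparseKJ G k j K ∧ (K.edges.card : ℤ) = fCount G k j K.edges

/-- The degree of a vertex in a subgraph (a loop counts twice). -/
def degree (G : GainedGraph V E Γ) (K : Subgraph G) (v : V) : ℕ :=
  (K.edges.filter fun e => G.tail e = v).card + (K.edges.filter fun e => G.head e = v).card

def HasLoopAt (G : GainedGraph V E Γ) (K : Subgraph G) (v : V) : Prop :=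
  ∃ e ∈ K.edges, G.tail e = v ∧ G.head e = v

/-- The neighbours of a vertex in a subgraph. -/
def neighbors (G : GainedGraph V E Γ) (K : Subgraph G) (v : V) : Finset V :=
  ((K.edges.filter fun e => G.tail e = v).image G.head) ∪
    ((K.edges.filter fun e => G.head e = v).image G.tail)

/-- The subgraph `K` satisfies the axioms of a `Γ`-gain graph. -/
structure IsGainGraphOn (G : GainedGraph V E Γ) (K : Subgraph G) : Prop where
  fixed_card : K.fixedVerts.card ≤ 1
  same_dir : ∀ e ∈ K.edges, ∀ f ∈ K.edges, e ≠ f → G.tail e = G.tail f →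
    G.head e = G.head f → G.gain e ≠ G.gain f
  opp_dir : ∀ e ∈ K.edges, ∀ f ∈ K.edges, e ≠ f → G.tail e = G.head f →
    G.head e = G.tail f → G.gain e ≠ (G.gain f)⁻¹
  fixed_not_loop : ∀ e ∈ K.edges, G.tail e = G.head e → G.tail e ∉ G.fixed
  fixed_not_parallel : ∀ e ∈ K.edges, ∀ f ∈ K.edges, e ≠ f →
    (G.tail e ∈ G.fixed ∨ G.head e ∈ G.fixed) →
    ({G.tail e, G.head e} : Finset V) ≠ {G.tail f, G.head f}
  loop_gain : ∀ e ∈ K.edges, G.tail e = G.head e → G.gain e ≠ 1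

/-- `H` together with the vertex `v` and all edges of `G₀` incident to `v`. -/
def addVertexEdges (G : GainedGraph V E Γ) (G₀ H : Subgraph G) (v : V) : Subgraph G where
  verts := (H.verts ∪ {v}) ∪
    ((G₀.edges.filter fun e => G.tail e = v ∨ G.head e = v).image G.tail ∪
      (G₀.edges.filter fun e => G.tail e = v ∨ G.head e = v).image G.head)
  edges := H.edges ∪ G₀.edges.filter fun e => G.tail e = v ∨ G.head e = v
  tail_mem e he := by
    rcases Finset.mem_union.1 he with h | h
    · exact Finset.mem_union_left _ (Finset.mem_union_left _ (H.tail_mem e h))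
    · exact Finset.mem_union_right _ (Finset.mem_union_left _ (Finset.mem_image_of_mem _ h))
  head_mem e he := by
    rcases Finset.mem_union.1 he with h | h
    · exact Finset.mem_union_left _ (Finset.mem_union_left _ (H.head_mem e h))
    · exact Finset.mem_union_right _ (Finset.mem_union_right _ (Finset.mem_image_of_mem _ h))

/-- The result of a 1-reduction at `v` adding the edge `f`: delete `v` and all edges at
`v` and add the edge `f`. -/
def reduceAt (G : GainedGraph V E Γ) (G₀ : Subgraph G) (v : V) (f : E) : Subgraph G where
  verts := insert (G.tail f) (insert (G.head f) (G₀.verts.erase v))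
  edges := insert f (G₀.edges.filter fun e => G.tail e ≠ v ∧ G.head e ≠ v)
  tail_mem e he := by
    rcases Finset.mem_insert.1 he with rfl | h
    · exact Finset.mem_insert_self _ _
    · rcases Finset.mem_filter.1 h with ⟨h1, h2, h3⟩
      exact Finset.mem_insert_of_mem
        (Finset.mem_insert_of_mem (Finset.mem_erase.2 ⟨h2, G₀.tail_mem e h1⟩))
  head_mem e he := by
    rcases Finset.mem_insert.1 he with rfl | h
    · exact Finset.mem_insert_of_mem (Finset.mem_insert_self _ _)
    · rcases Finset.mem_filter.1 h with ⟨h1, h2, h3⟩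
      exact Finset.mem_insert_of_mem
        (Finset.mem_insert_of_mem (Finset.mem_erase.2 ⟨h3, G₀.head_mem e h1⟩))

/-- The new edge `f` arises from a 1-reduction at the vertex `v` of `G₀`: its endpoints are
joined to `v` by two distinct edges of `G₀` and its gain is the gain of the corresponding
path of length two through `v`. -/
def IsOneReduction (G : GainedGraph V E Γ) (G₀ : Subgraph G) (v : V) (f : E) : Prop :=
  f ∉ G₀.edges ∧ G.tail f ≠ v ∧ G.head f ≠ v ∧
    ∃ s₁ s₂ : E × Bool, s₁.1 ∈ G₀.edges ∧ s₂.1 ∈ G₀.edges ∧ s₁.1 ≠ s₂.1 ∧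
      stepEnd G s₁ = v ∧ stepStart G s₂ = v ∧
      G.tail f = stepStart G s₁ ∧ G.head f = stepEnd G s₂ ∧
      G.gain f = stepGain G s₁ * stepGain G s₂

/-- Two labelled edges coincide (up to reorientation with gain inversion). -/
def SameEdge (G : GainedGraph V E Γ) (e f : E) : Prop :=
  (G.tail e = G.tail f ∧ G.head e = G.head f ∧ G.gain e = G.gain f) ∨
    (G.tail e = G.head f ∧ G.head e = G.tail f ∧ G.gain e = (G.gain f)⁻¹)

/-- `H` is a blocker of the 1-reduction at `v` adding the edge `f`. -/
def IsBlocker (G : GainedGraph V E Γ) (k j : ℕ) (G₀ : Subgraph G) (v : V) (f : E)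
    (H : Subgraph G) : Prop :=
  H ≤ G₀ ∧ v ∉ H.verts ∧ G.tail f ∈ H.verts ∧ G.head f ∈ H.verts ∧ H.edges.Nonempty ∧
    Connected G (H.addEdge f) ∧
    (H.edges.card : ℤ) = 2 * (H.verts.card : ℤ) - 3 + alpha G k j (H.addEdge f)

/-- The graph `G` extended by one fresh edge `none` with tail `t`, head `h` and gain `g`. -/
def extendGraph (G : GainedGraph V E Γ) (t h : V) (g : Γ) : GainedGraph V (Option E) Γ where
  tail e := e.elim t G.tail
  head e := e.elim h G.head
  gain e := e.elim g G.gain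
  fixed := G.fixed

/-- The whole original graph `G`, viewed inside the extension. -/
def extendTop (G : GainedGraph V E Γ) (t h : V) (g : Γ) : Subgraph (extendGraph G t h g) where
  verts := Finset.univ
  edges := Finset.univ.image Option.some
  tail_mem _ _ := Finset.mem_univ _
  head_mem _ _ := Finset.mem_univ _

/-- There is an admissible 1-reduction at `v`, i.e. a choice of new edge (with
endpoints and gain coming from a path of length two through `v`) such that the
resulting `Γ`-gain graph is well defined and `ℤ_k^j`-gain tight. -/
def AdmissibleOneReductionExists (G : GainedGraph V E Γ) (k j : ℕ) (v : V) : Prop :=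
  ∃ t h : V, ∃ g : Γ,
    IsOneReduction (extendGraph G t h g) (extendTop G t h g) v none ∧
    IsGainGraphOn (extendGraph G t h g)
      (reduceAt (extendGraph G t h g) (extendTop G t h g) v none) ∧
    GainTightKJ (extendGraph G t h g) k j
      (reduceAt (extendGraph G t h g) (extendTop G t h g) v none)

end GR

/-!
Let `I = H₁ ∩ H₂` and let `v` be the base vertex of `H₁`. A connected `(2,3)`-tight graph has at
least two vertices and no cut vertex, so we may fix `b ∈ I` with `b ≠ v`, and any two vertices of
`I` are joined by a walk in `I` that does not pass through `v`. As `H₂` is connected and balanced,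
its walk gains are differences `φ(x)⁻¹ φ(y)` of a potential `φ`. Retract every vertex outside `H₁`
to `b` and replace each edge of `H₂` not in `H₁` by such a walk in `I` between the retracted ends.
This turns walks of `H₁ ∪ H₂` into walks of `H₁` whose gain differs only by the potential
correction at the two ends, and it never introduces `v` as an interior vertex. Hence `H₁ ∪ H₂` has
the same gain group as `H₁`, and the near-balanced condition at `v` transfers from `H₁`.
-/

namespace GR

section Walks

variable {V E Γ : Type} {G : GainedGraph V E Γ} {H K : Subgraph G}

lemma stepStart_mem {s : E × Bool} (h : s.1 ∈ H.edges) : stepStart G s ∈ H.verts := by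
  unfold stepStart; split
  · exact H.tail_mem _ h
  · exact H.head_mem _ h

lemma stepEnd_mem {s : E × Bool} (h : s.1 ∈ H.edges) : stepEnd G s ∈ H.verts := by
  unfold stepEnd; split
  · exact H.head_mem _ h
  · exact H.tail_mem _ h

lemma stepStart_ne_stepEnd {s : E × Bool} (h : G.tail s.1 ≠ G.head s.1) :
    stepStart G s ≠ stepEnd G s := by
  rcases s with ⟨e, _ | _⟩ <;> simp [stepStart, stepEnd, h, Ne.symm h]

lemma IsWalk.mono (hHK : H ≤ K) :
    ∀ {L : List (E × Bool)} {u w : V}, IsWalk G H L u w → IsWalk G K L u w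
  | [], _, _, h => ⟨h.1, hHK.1 h.2⟩
  | _ :: _, _, _, h => ⟨hHK.2 h.1, h.2.1, h.2.2.mono hHK⟩

lemma IsWalk.start_mem {L : List (E × Bool)} {u w : V} (h : IsWalk G H L u w) :
    u ∈ H.verts := by
  cases L with
  | nil => exact h.2
  | cons s L => exact h.2.1 ▸ stepStart_mem h.1

lemma IsWalk.mem_verts :
    ∀ {L : List (E × Bool)} {u w : V}, IsWalk G H L u w → ∀ x ∈ walkVerts G u L, x ∈ H.verts
  | [], _, _, h, _, hx => List.mem_singleton.1 hx ▸ h.2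
  | _ :: _, _, _, h, _, hx => by
    rcases List.mem_cons.1 hx with rfl | hx
    · exact h.start_mem
    · exact h.2.2.mem_verts _ hx

lemma IsWalk.end_mem {L : List (E × Bool)} {u w : V} (h : IsWalk G H L u w) : w ∈ H.verts := by
  induction L generalizing u with
  | nil => exact h.1 ▸ h.2
  | cons s L ih => exact ih h.2.2

lemma IsWalk.append :
    ∀ {L₁ L₂ : List (E × Bool)} {u w x : V},
      IsWalk G H L₁ u w → IsWalk G H L₂ w x → IsWalk G H (L₁ ++ L₂) u x
  | [], _, _, _, _, h₁, h₂ => h₁.1 ▸ h₂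
  | _ :: _, _, _, _, _, h₁, h₂ => ⟨h₁.1, h₁.2.1, h₁.2.2.append h₂⟩

lemma IsWalk.single {s : E × Bool} (h : s.1 ∈ H.edges) :
    IsWalk G H [s] (stepStart G s) (stepEnd G s) :=
  ⟨h, rfl, rfl, stepEnd_mem h⟩

lemma Connected.exists_step (hc : Connected G H) {a b : V} (ha : a ∈ H.verts)
    (hb : b ∈ H.verts) (hab : a ≠ b) : ∃ s : E × Bool, s.1 ∈ H.edges ∧ stepStart G s = a := by
  obtain ⟨_ | ⟨s, L⟩, hL⟩ := hc.2 a ha b hb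
  · exact absurd hL.1 hab
  · exact ⟨s, hL.1, hL.2.1⟩

def revStep (s : E × Bool) : E × Bool := (s.1, !s.2)

def walkRev (L : List (E × Bool)) : List (E × Bool) := (L.map revStep).reverse

lemma stepStart_revStep (s : E × Bool) : stepStart G (revStep s) = stepEnd G s := by
  rcases s with ⟨e, _ | _⟩ <;> rfl

lemma stepEnd_revStep (s : E × Bool) : stepEnd G (revStep s) = stepStart G s := by
  rcases s with ⟨e, _ | _⟩ <;> rfl

lemma IsWalk.reverse :
    ∀ {L : List (E × Bool)} {u w : V}, IsWalk G H L u w → IsWalk G H (walkRev L) w u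
  | [], _, _, h => ⟨h.1.symm, h.1 ▸ h.2⟩
  | s :: _, _, _, ⟨hs, hsu, hL⟩ => by
    have hrev : IsWalk G H [revStep s] (stepEnd G s) (stepStart G s) := by
      simpa only [stepStart_revStep, stepEnd_revStep] using
        IsWalk.single (G := G) (s := revStep s) hs
    simpa [walkRev, hsu] using hL.reverse.append hrev

section Gains

variable [Group Γ]

lemma walkGain_nil : walkGain G [] = 1 := rfl

lemma walkGain_cons (s : E × Bool) (L : List (E × Bool)) :
    walkGain G (s :: L) = stepGain G s * walkGain G L := by
  simp [walkGain]

lemma walkGain_singleton (s : E × Bool) : walkGain G [s] = stepGain G s := by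
  simp [walkGain]

lemma walkGain_append (L₁ L₂ : List (E × Bool)) :
    walkGain G (L₁ ++ L₂) = walkGain G L₁ * walkGain G L₂ := by
  simp [walkGain]

lemma walkGain_walkRev (L : List (E × Bool)) : walkGain G (walkRev L) = (walkGain G L)⁻¹ := by
  induction L with
  | nil => simp [walkRev, walkGain]
  | cons s L ih =>
    have hs : stepGain G (revStep s) = (stepGain G s)⁻¹ := by
      rcases s with ⟨e, _ | _⟩ <;> simp [revStep, stepGain]
    simp only [walkRev, List.map_cons, List.reverse_cons, walkGain_append, walkGain_cons,
      walkGain_nil, mul_one, mul_inv_rev, hs] at ih ⊢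
    rw [ih]

end Gains

end Walks

section Interior

variable {V E Γ : Type} {G : GainedGraph V E Γ} {H : Subgraph G}

def walkInterior (G : GainedGraph V E Γ) (L : List (E × Bool)) : List V :=
  (L.map (stepEnd G)).dropLast

lemma mem_map_stepEnd_of_mem_walkInterior {L : List (E × Bool)} {x : V}
    (h : x ∈ walkInterior G L) : x ∈ L.map (stepEnd G) :=
  List.dropLast_subset _ h

lemma walkInterior_cons_cons (s t : E × Bool) (L : List (E × Bool)) :
    walkInterior G (s :: t :: L) = stepEnd G s :: walkInterior G (t :: L) := by
  simp [walkInterior]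

lemma mem_walkInterior_append {L₁ L₂ : List (E × Bool)} {x : V}
    (h : x ∈ walkInterior G (L₁ ++ L₂)) : x ∈ L₁.map (stepEnd G) ∨ x ∈ walkInterior G L₂ := by
  rcases eq_or_ne L₂ [] with rfl | hL₂
  · exact Or.inl (mem_map_stepEnd_of_mem_walkInterior (by simpa using h))
  · rw [walkInterior, List.map_append, List.dropLast_append_of_ne_nil (by simpa using hL₂)] at h
    exact List.mem_append.1 h

lemma IsWalk.mem_walkInterior_or_eq :
    ∀ {L : List (E × Bool)} {u w x : V}, IsWalk G H L u w → x ∈ L.map (stepEnd G) →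
      x ∈ walkInterior G L ∨ x = w
  | [], _, _, _, _, hx => by simp at hx
  | [_], _, _, _, h, hx => Or.inr ((List.mem_singleton.1 hx).trans h.2.2.1)
  | s :: t :: L, _, _, _, h, hx => by
    rw [walkInterior_cons_cons]
    rcases List.mem_cons.1 hx with rfl | hx
    · exact Or.inl List.mem_cons_self
    · exact (h.2.2.mem_walkInterior_or_eq hx).imp_left (List.mem_cons_of_mem _)

def ConnectedAvoiding (G : GainedGraph V E Γ) (H : Subgraph G) (v : V) : Prop :=
  ∀ p ∈ H.verts, ∀ q ∈ H.verts, ∃ Q, IsWalk G H Q p q ∧ v ∉ walkInterior G Q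

end Interior

section Balanced

variable {V E Γ : Type} [Group Γ] {G : GainedGraph V E Γ} {H K : Subgraph G}

lemma gainGroup_mono (hHK : H ≤ K) : gainGroup G H ≤ gainGroup G K :=
  Subgroup.closure_mono fun _ ⟨u, L, hL, hfix, hg⟩ => ⟨u, L, hL.mono hHK, hfix, hg⟩

lemma walkGain_eq_one_of_balanced (hnf : NoFixed G H) (hb : Balanced G H)
    {L : List (E × Bool)} {u : V} (h : IsWalk G H L u u) : walkGain G L = 1 := by
  have : walkGain G L ∈ gainGroup G H :=
    Subgroup.subset_closure ⟨u, L, h, fun x hx => hnf x (h.mem_verts x hx), rfl⟩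
  rwa [hb, Subgroup.mem_bot] at this

def IsPotential (G : GainedGraph V E Γ) (H : Subgraph G) (φ : V → Γ) : Prop :=
  ∀ L x y, IsWalk G H L x y → walkGain G L = (φ x)⁻¹ * φ y

lemma exists_isPotential_of_balanced (hnf : NoFixed G H) (hb : Balanced G H)
    (hc : Connected G H) : ∃ φ : V → Γ, IsPotential G H φ := by
  obtain ⟨o, ho⟩ := hc.1
  choose P hP using fun x (hx : x ∈ H.verts) => hc.2 o ho x hx
  refine ⟨fun x => if hx : x ∈ H.verts then walkGain G (P x hx) else 1, fun L x y hL => ?_⟩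
  have hx := hL.start_mem
  have hy := hL.end_mem
  have hcycle := walkGain_eq_one_of_balanced hnf hb (((hP x hx).append hL).append (hP y hy).reverse)
  rw [walkGain_append, walkGain_append, walkGain_walkRev, mul_inv_eq_one] at hcycle
  simp only [dif_pos hx, dif_pos hy, ← hcycle, inv_mul_cancel_left]

end Balanced

section Counting

variable {V E Γ : Type} [DecidableEq V] {G : GainedGraph V E Γ} {H I K : Subgraph G}

lemma Subgraph.card_freeVerts_add_card_fixedVerts (H : Subgraph G) :
    H.freeVerts.card + H.fixedVerts.card = H.verts.card :=
  Finset.card_sdiff_add_card_inter _ _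

lemma Sparse.card_edges_le {l : ℤ} (hK : Sparse G 2 l K) (hHK : H ≤ K)
    (hne : H.edges.Nonempty) : (H.edges.card : ℤ) ≤ 2 * H.verts.card - l := by
  have := hK H hHK hne
  have := H.card_freeVerts_add_card_fixedVerts
  omega

lemma Tight.card_edges_eq {l : ℤ} (hK : Tight G 2 l K) :
    (K.edges.card : ℤ) = 2 * K.verts.card - l := by
  have := hK.2
  have := K.card_freeVerts_add_card_fixedVerts
  omega

lemma mem_edgeSpan_verts {F : Finset E} {x : V} :
    x ∈ (edgeSpan G F).verts ↔ ∃ e ∈ F, G.tail e = x ∨ G.head e = x := by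
  simp only [edgeSpan, Finset.mem_union, Finset.mem_image, ← exists_or, ← and_or_left]

lemma edgeSpan_le {F : Finset E} (hF : F ⊆ H.edges) : edgeSpan G F ≤ H := by
  refine ⟨fun x hx => ?_, hF⟩
  obtain ⟨e, he, rfl | rfl⟩ := mem_edgeSpan_verts.1 hx
  · exact H.tail_mem e (hF he)
  · exact H.head_mem e (hF he)

lemma Sparse.tail_ne_head {l : ℤ} (hK : Sparse G 2 l K) (hl : 1 < l) {e : E}
    (he : e ∈ K.edges) : G.tail e ≠ G.head e := by
  intro hloop
  have := hK.card_edges_le (edgeSpan_le (Finset.singleton_subset_iff.2 he))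
    (Finset.singleton_nonempty e)
  simp [edgeSpan, hloop] at this
  omega

lemma Tight.edges_nonempty {l : ℤ} (hK : Tight G 2 l K) (hl : Odd l) : K.edges.Nonempty := by
  rw [Finset.nonempty_iff_ne_empty]
  intro h
  have := hK.card_edges_eq
  rw [h] at this
  obtain ⟨m, rfl⟩ := hl
  simp only [Finset.card_empty, Nat.cast_zero] at this
  omega

lemma Tight.exists_mem_verts_ne (hK : Tight G 2 3 K) (v : V) : ∃ b ∈ K.verts, b ≠ v := by
  obtain ⟨e, he⟩ := hK.edges_nonempty (by decide)
  have hloop := hK.1.tail_ne_head (by norm_num) he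
  by_cases h : G.tail e = v
  · exact ⟨G.head e, K.head_mem e he, fun h' => hloop (h.trans h'.symm)⟩
  · exact ⟨G.tail e, K.tail_mem e he, h⟩

end Counting

section DeleteVertex

variable {V E Γ : Type} [DecidableEq V] {G : GainedGraph V E Γ}

lemma Subgraph.deleteVertex_le (H : Subgraph G) (v : V) : H.deleteVertex v ≤ H :=
  ⟨Finset.erase_subset _ _, Finset.filter_subset _ _⟩

lemma mem_deleteVertex_edges {H : Subgraph G} {v : V} {s : E × Bool} (hs : s.1 ∈ H.edges)
    (h₁ : stepStart G s ≠ v) (h₂ : stepEnd G s ≠ v) : s.1 ∈ (H.deleteVertex v).edges := by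
  rcases s with ⟨e, _ | _⟩ <;> exact Finset.mem_filter.2 ⟨hs, by simp_all [stepStart, stepEnd]⟩

lemma IsWalk.notMem_map_stepEnd_of_deleteVertex {H : Subgraph G} {v u w : V}
    {L : List (E × Bool)} (h : IsWalk G (H.deleteVertex v) L u w) : v ∉ L.map (stepEnd G) :=
  fun hv => (Finset.mem_erase.1 (h.mem_verts v (List.mem_cons_of_mem _ hv))).1 rfl

end DeleteVertex

section Separation

variable {V E Γ : Type} [DecidableEq V] [DecidableEq E] {G : GainedGraph V E Γ}
  {I : Subgraph G}

lemma Tight.two_le_card_verts_inter (hI : Tight G 2 3 I) {A B : Subgraph G} (hA : A ≤ I)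
    (hB : B ≤ I) (hAne : A.edges.Nonempty) (hBne : B.edges.Nonempty)
    (hcover : I.edges ⊆ A.edges ∪ B.edges) : 2 ≤ (A.verts ∩ B.verts).card := by
  have hEA := hI.1.card_edges_le hA hAne
  have hEB := hI.1.card_edges_le hB hBne
  have hEI := hI.card_edges_eq
  have hE := (Finset.card_le_card hcover).trans (Finset.card_union_le _ _)
  have hV := Finset.card_union_add_card_inter A.verts B.verts
  have hVI := Finset.card_le_card (Finset.union_subset hA.1 hB.1)
  omega

/-- No single vertex `v` separates a connected `(2,3)`-tight graph. -/
lemma Tight.exists_step_leaving (hI : Tight G 2 3 I) (hc : Connected G I) (v : V)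
    {S : Finset V} {a b : V} (ha : a ∈ I.verts) (haS : a ∈ S) (hb : b ∈ I.verts)
    (hbS : b ∉ S) (hbv : b ≠ v) :
    ∃ s : E × Bool, s.1 ∈ I.edges ∧ stepStart G s ∈ S ∧ stepEnd G s ∉ S ∧ stepEnd G s ≠ v := by
  by_contra! hclosed
  have hhead : ∀ e ∈ I.edges, G.tail e ∈ S → G.head e ∈ S ∨ G.head e = v :=
    fun e he h => or_iff_not_imp_left.2 (hclosed (e, true) he h)
  have htail : ∀ e ∈ I.edges, G.head e ∈ S → G.tail e ∈ S ∨ G.tail e = v :=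
    fun e he h => or_iff_not_imp_left.2 (hclosed (e, false) he h)
  set touchesS : E → Prop := fun e => G.tail e ∈ S ∨ G.head e ∈ S
  set A := edgeSpan G (I.edges.filter touchesS)
  set B := edgeSpan G (I.edges.filter fun e => ¬ touchesS e)
  have hab : a ≠ b := by rintro rfl; exact hbS haS
  have hAne : A.edges.Nonempty := by
    obtain ⟨⟨e, _ | _⟩, hs, rfl⟩ := hc.exists_step ha hb hab <;>
      exact ⟨e, Finset.mem_filter.2 ⟨hs, by simp_all [touchesS, stepStart]⟩⟩
  have hBne : B.edges.Nonempty := by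
    obtain ⟨⟨e, _ | _⟩, hs, rfl⟩ := hc.exists_step hb ha hab.symm <;>
      refine ⟨e, Finset.mem_filter.2 ⟨hs, ?_⟩⟩ <;> simp only [touchesS, stepStart] at hbS hbv ⊢
    · exact fun h => h.elim (fun h => (hhead e hs h).elim hbS hbv) hbS
    · exact fun h => h.elim hbS (fun h => (htail e hs h).elim hbS hbv)
  have hsep : (A.verts ∩ B.verts).card ≤ 1 := by
    refine Finset.card_le_one.2 fun x hx y hy => ?_
    suffices ∀ z ∈ A.verts ∩ B.verts, z = v by rw [this x hx, this y hy]
    intro z hz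
    obtain ⟨⟨e, he, hez⟩, ⟨f, hf, hfz⟩⟩ := (Finset.mem_inter.1 hz).imp mem_edgeSpan_verts.1
      mem_edgeSpan_verts.1
    simp only [Finset.mem_filter, touchesS] at he hf
    have hzS : z ∉ S := by rcases hfz with rfl | rfl <;> tauto
    rcases hez with rfl | rfl
    · exact (he.2.elim Or.inl (htail e he.1)).resolve_left hzS
    · exact (he.2.elim (hhead e he.1) Or.inl).resolve_left hzS
  have hcover : I.edges ⊆ A.edges ∪ B.edges := (Finset.filter_union_filter_not_eq _ _).ge
  have : 2 ≤ (A.verts ∩ B.verts).card :=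
    hI.two_le_card_verts_inter (edgeSpan_le (Finset.filter_subset _ _))
      (edgeSpan_le (Finset.filter_subset _ _)) hAne hBne hcover
  omega

lemma Tight.reachable_deleteVertex (hI : Tight G 2 3 I) (hc : Connected G I) {v a b : V}
    (ha : a ∈ I.verts) (hav : a ≠ v) (hb : b ∈ I.verts) (hbv : b ≠ v) :
    Reachable G (I.deleteVertex v) a b := by
  by_contra hab
  set S := I.verts.filter (Reachable G (I.deleteVertex v) a)
  have haS : a ∈ S := Finset.mem_filter.2 ⟨ha, [], rfl, Finset.mem_erase.2 ⟨hav, ha⟩⟩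
  obtain ⟨s, hs, hsS, hsS', hsv⟩ := hI.exists_step_leaving hc v ha haS hb
    (fun h => hab (Finset.mem_filter.1 h).2) hbv
  obtain ⟨L, hL⟩ := (Finset.mem_filter.1 hsS).2
  have hstart : stepStart G s ≠ v := (Finset.mem_erase.1 hL.end_mem).1
  exact hsS' (Finset.mem_filter.2 ⟨stepEnd_mem hs, L ++ [s],
    hL.append (IsWalk.single (mem_deleteVertex_edges hs hstart hsv))⟩)

lemma Tight.connectedAvoiding (hI : Tight G 2 3 I) (hc : Connected G I) (v : V) :
    ConnectedAvoiding G I v := by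
  intro p hp q hq
  by_cases hvI : v ∉ I.verts
  · obtain ⟨Q, hQ⟩ := hc.2 p hp q hq
    exact ⟨Q, hQ, fun hv => hvI (hQ.mem_verts v
      (List.mem_cons_of_mem _ (mem_map_stepEnd_of_mem_walkInterior hv)))⟩
  rw [not_not] at hvI
  have hdel : ∀ x ∈ I.verts, x ≠ v → ∀ y ∈ I.verts, y ≠ v →
      ∃ L, IsWalk G I L x y ∧ v ∉ L.map (stepEnd G) := by
    intro x hx hxv y hy hyv
    obtain ⟨L, hL⟩ := hI.reachable_deleteVertex hc hx hxv hy hyv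
    exact ⟨L, hL.mono (I.deleteVertex_le v), hL.notMem_map_stepEnd_of_deleteVertex⟩
  obtain ⟨b, hb, hbv⟩ := hI.exists_mem_verts_ne v
  obtain ⟨s, hs, rfl⟩ := hc.exists_step hvI hb hbv.symm
  have hsv : stepEnd G s ≠ stepStart G s :=
    (stepStart_ne_stepEnd (hI.1.tail_ne_head (by norm_num) hs)).symm
  rcases eq_or_ne p (stepStart G s) with rfl | hpv <;>
    rcases eq_or_ne q (stepStart G s) with rfl | hqv
  · exact ⟨[], ⟨rfl, hp⟩, by simp [walkInterior]⟩
  · obtain ⟨L, hL, hLv⟩ := hdel _ (stepEnd_mem hs) hsv q hq hqv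
    refine ⟨[s] ++ L, (IsWalk.single hs).append hL, fun hv => ?_⟩
    rcases mem_walkInterior_append hv with h | h
    · exact hsv (List.mem_singleton.1 h).symm
    · exact hLv (mem_map_stepEnd_of_mem_walkInterior h)
  · obtain ⟨L, hL, hLv⟩ := hdel p hp hpv _ (stepEnd_mem hs) hsv
    refine ⟨L ++ walkRev [s], hL.append (IsWalk.single hs).reverse, fun hv => ?_⟩
    rcases mem_walkInterior_append hv with h | h
    · exact hLv h
    · simp [walkInterior, walkRev] at h
  · obtain ⟨L, hL, hLv⟩ := hdel p hp hpv q hq hqv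
    exact ⟨L, hL, fun hv => hLv (mem_map_stepEnd_of_mem_walkInterior hv)⟩

end Separation

section Retraction

variable {V E Γ : Type} [DecidableEq V] {G : GainedGraph V E Γ} {H : Subgraph G} {b v x : V}

def Subgraph.retract (H : Subgraph G) (b x : V) : V := if x ∈ H.verts then x else b

lemma Subgraph.retract_of_mem (hx : x ∈ H.verts) : H.retract b x = x := if_pos hx

lemma Subgraph.retract_mem (hb : b ∈ H.verts) (x : V) : H.retract b x ∈ H.verts := by
  unfold Subgraph.retract; split_ifs with hx
  exacts [hx, hb]

lemma Subgraph.retract_ne (hbv : b ≠ v) (hx : x ≠ v) : H.retract b x ≠ v := by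
  unfold Subgraph.retract; split_ifs
  exacts [hx, hbv]

section Gains

variable [Group Γ] {φ : V → Γ}

/-- If `φ` is a potential on `K` and `x`, `H.retract b x` lie in `K`, this is the gain of any walk
in `K` from `x` to `H.retract b x`. -/
def retractGain (φ : V → Γ) (H : Subgraph G) (b x : V) : Γ := (φ x)⁻¹ * φ (H.retract b x)

lemma retractGain_of_mem (hx : x ∈ H.verts) : retractGain φ H b x = 1 := by
  simp [retractGain, Subgraph.retract_of_mem hx]

end Gains

end Retraction

section Union

variable {V E Γ : Type} [DecidableEq V] [DecidableEq E] {G : GainedGraph V E Γ}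
  {H₁ H₂ : Subgraph G} {b v x : V}

lemma Subgraph.le_union_left (H K : Subgraph G) : H ≤ H.union K :=
  ⟨Finset.subset_union_left, Finset.subset_union_left⟩

lemma Subgraph.inter_le_left (H K : Subgraph G) : H.inter K ≤ H :=
  ⟨Finset.inter_subset_left, Finset.inter_subset_left⟩

lemma Subgraph.inter_le_right (H K : Subgraph G) : H.inter K ≤ K :=
  ⟨Finset.inter_subset_right, Finset.inter_subset_right⟩

lemma NoFixed.union (h₁ : NoFixed G H₁) (h₂ : NoFixed G H₂) : NoFixed G (H₁.union H₂) :=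
  fun x hx => (Finset.mem_union.1 hx).elim (h₁ x) (h₂ x)

lemma Subgraph.retract_mem_inter (hb : b ∈ (H₁.inter H₂).verts) (hx : x ∈ H₂.verts) :
    H₁.retract b x ∈ (H₁.inter H₂).verts := by
  unfold Subgraph.retract; split_ifs with hx₁
  exacts [Finset.mem_inter.2 ⟨hx₁, hx⟩, hb]

section Group

variable [Group Γ] {φ : V → Γ}

lemma exists_walk_replacing_step (hφ : IsPotential G H₂ φ)
    (hI : ConnectedAvoiding G (H₁.inter H₂) v) (hb : b ∈ (H₁.inter H₂).verts)
    {s : E × Bool} (hs : s.1 ∈ (H₁.union H₂).edges) :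
    ∃ Q, IsWalk G H₁ Q (H₁.retract b (stepStart G s)) (H₁.retract b (stepEnd G s)) ∧
      walkGain G Q = (retractGain φ H₁ b (stepStart G s))⁻¹ * stepGain G s *
        retractGain φ H₁ b (stepEnd G s) ∧
      v ∉ walkInterior G Q := by
  by_cases hs₁ : s.1 ∈ H₁.edges
  · refine ⟨[s], ?_, ?_, by simp [walkInterior]⟩
    · rw [Subgraph.retract_of_mem (stepStart_mem hs₁), Subgraph.retract_of_mem (stepEnd_mem hs₁)]
      exact IsWalk.single hs₁
    · rw [retractGain_of_mem (stepStart_mem hs₁), retractGain_of_mem (stepEnd_mem hs₁),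
        walkGain_singleton, inv_one, one_mul, mul_one]
  have hs₂ : s.1 ∈ H₂.edges := (Finset.mem_union.1 hs).resolve_left hs₁
  obtain ⟨Q, hQ, hQv⟩ := hI _ (Subgraph.retract_mem_inter hb (stepStart_mem hs₂))
    _ (Subgraph.retract_mem_inter hb (stepEnd_mem hs₂))
  refine ⟨Q, hQ.mono (H₁.inter_le_left H₂), ?_, hQv⟩
  have hsgain := hφ [s] _ _ (IsWalk.single hs₂)
  rw [walkGain_singleton] at hsgain
  rw [hφ Q _ _ (hQ.mono (H₁.inter_le_right H₂)), hsgain, retractGain, retractGain]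
  group

lemma exists_walk_replacing (hφ : IsPotential G H₂ φ) (hI : ConnectedAvoiding G (H₁.inter H₂) v)
    (hb : b ∈ (H₁.inter H₂).verts) (hbv : b ≠ v) :
    ∀ {W : List (E × Bool)} {x y : V}, IsWalk G (H₁.union H₂) W x y →
      ∃ W', IsWalk G H₁ W' (H₁.retract b x) (H₁.retract b y) ∧
        walkGain G W' = (retractGain φ H₁ b x)⁻¹ * walkGain G W * retractGain φ H₁ b y ∧
        (v ∉ walkInterior G W → v ∉ walkInterior G W')
  | [], x, _, ⟨rfl, _⟩ =>
    ⟨[], ⟨rfl, H₁.retract_mem ((H₁.inter_le_left H₂).1 hb) x⟩, by simp [walkGain_nil],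
      fun _ => by simp [walkInterior]⟩
  | [s], _, _, ⟨hs, rfl, rfl, _⟩ => by
    obtain ⟨Q, hQ, hQgain, hQv⟩ := exists_walk_replacing_step hφ hI hb hs
    exact ⟨Q, hQ, by rw [hQgain, walkGain_singleton], fun _ => hQv⟩
  | s :: t :: W, _, _, ⟨hs, rfl, hW⟩ => by
    obtain ⟨Q, hQ, hQgain, hQv⟩ := exists_walk_replacing_step hφ hI hb hs
    obtain ⟨W', hW', hW'gain, hW'v⟩ := exists_walk_replacing hφ hI hb hbv hW
    refine ⟨Q ++ W', hQ.append hW', ?_, fun hv hv' => ?_⟩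
    · rw [walkGain_append, hQgain, hW'gain, walkGain_cons s]
      group
    rw [walkInterior_cons_cons, List.mem_cons, not_or] at hv
    rcases mem_walkInterior_append hv' with h | h
    · rcases hQ.mem_walkInterior_or_eq h with h | h
      · exact hQv h
      · exact Subgraph.retract_ne hbv (Ne.symm hv.1) h.symm
    · exact hW'v hv.2 h

lemma NearBalancedAt.union {δ : Γ} (h : NearBalancedAt G H₁ v δ) (hv : v ∈ H₁.verts)
    (hφ : IsPotential G H₂ φ) (hI : ConnectedAvoiding G (H₁.inter H₂) v)
    (hb : b ∈ (H₁.inter H₂).verts) (hbv : b ≠ v) : NearBalancedAt G (H₁.union H₂) v δ := by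
  refine ⟨fun hbal => h.1 (eq_bot_iff.2 (hbal ▸ gainGroup_mono (H₁.le_union_left H₂))),
    fun W hW hWv => ?_⟩
  obtain ⟨W', hW', hgain, hW'v⟩ := exists_walk_replacing hφ hI hb hbv hW
  rw [Subgraph.retract_of_mem hv] at hW'
  rw [retractGain_of_mem hv, inv_one, one_mul, mul_one] at hgain
  exact hgain ▸ h.2 W' hW' fun x hx hxv => hW'v (fun h' => hWv v h' rfl) (hxv ▸ hx)

end Group

/-- Replacement conjugates the gain of a closed walk at `u` by `retractGain φ H₁ b u`, hence
the commutativity. -/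
lemma gainGroup_union_eq [CommGroup Γ] {φ : V → Γ} (hnf₁ : NoFixed G H₁) (hφ : IsPotential G H₂ φ)
    (hI : ConnectedAvoiding G (H₁.inter H₂) v) (hb : b ∈ (H₁.inter H₂).verts) (hbv : b ≠ v) :
    gainGroup G (H₁.union H₂) = gainGroup G H₁ := by
  refine le_antisymm ((Subgroup.closure_le _).2 ?_) (gainGroup_mono (H₁.le_union_left H₂))
  rintro _ ⟨u, W, hW, -, rfl⟩
  obtain ⟨W', hW', hgain, -⟩ := exists_walk_replacing hφ hI hb hbv hW
  rw [mul_comm, mul_inv_cancel_left] at hgain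
  exact Subgroup.subset_closure ⟨_, W', hW', fun x hx => hnf₁ x (hW'.mem_verts x hx), hgain⟩

end Union

theorem union_proper_near_balanced_general {V E : Type} [DecidableEq V] [DecidableEq E] (k : ℕ)
    (G : GainedGraph V E (Multiplicative (ZMod k)))
    (H₁ H₂ : Subgraph G)
    (hnf₂ : NoFixed G H₂)
    (hpnb : ProperNearBalanced G H₁)
    (hc₂ : Connected G H₂) (hbal₂ : Balanced G H₂)
    (hcI : Connected G (H₁.inter H₂))
    (htI : Tight G 2 3 (H₁.inter H₂)) :
    ProperNearBalanced G (H₁.union H₂) := by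
  obtain ⟨⟨hnf₁, v, hv, δ, hnb⟩, hni₂, hni₃⟩ := hpnb
  obtain ⟨b, hb, hbv⟩ := htI.exists_mem_verts_ne v
  obtain ⟨φ, hφ⟩ := exists_isPotential_of_balanced hnf₂ hbal₂ hc₂
  have hI := htI.connectedAvoiding hcI v
  have hiso (n : ℕ) (h : IsZIso G (H₁.union H₂) n) : IsZIso G H₁ n := by
    rwa [IsZIso, gainGroup_union_eq hnf₁ hφ hI hb hbv] at h
  exact ⟨⟨hnf₁.union hnf₂, v, Finset.mem_union_left _ hv, δ, hnb.union hv hφ hI hb hbv⟩,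
    fun h => hni₂ (hiso 2 h), fun h => hni₃ (hiso 3 h)⟩

/-- Let `H₁, H₂` be subgraphs with no fixed vertex.  Suppose `H₁` is
proper near-balanced with `|E(H₁)| = 2|V(H₁)|` and there is `f₁ ∈ E(H₁)` with
`H₁ − f₁` `(2,1)`-tight.  If `H₂` is connected and balanced and `H₁ ∩ H₂` is connected,
balanced and `(2,3)`-tight, then `H₁ ∪ H₂` is proper near-balanced. -/
theorem union_proper_near_balanced {V E : Type} [DecidableEq V] [DecidableEq E]
    [Fintype V] [Fintype E] (k : ℕ) (hk : 0 < k)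
    (G : GainedGraph V E (Multiplicative (ZMod k)))
    (hG : IsGainGraphOn G (⊤ : Subgraph G))
    (H₁ H₂ : Subgraph G)
    (hnf₁ : NoFixed G H₁) (hnf₂ : NoFixed G H₂)
    (hpnb : ProperNearBalanced G H₁)
    (hcard : H₁.edges.card = 2 * H₁.verts.card)
    (f₁ : E) (hf₁ : f₁ ∈ H₁.edges) (htight : Tight G 2 1 (H₁.deleteEdge f₁))
    (hc₂ : Connected G H₂) (hbal₂ : Balanced G H₂)
    (hcI : Connected G (H₁.inter H₂)) (hbalI : Balanced G (H₁.inter H₂))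
    (htI : Tight G 2 3 (H₁.inter H₂)) :
    ProperNearBalanced G (H₁.union H₂) :=
  union_proper_near_balanced_general k G H₁ H₂ hnf₂ hpnb hc₂ hbal₂ hcI htI

end GR
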